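/- arXiv:2111.02102 — 3 statements merged into one kernel-verified Lean document; each statement's English description precedes it below -/
import Mathlib

section
/- Let R be an almost Dedekind domain and I a nonzero fractional ideal of R. Then the support of ν_I in Max(R) (with the inverse topology) is compact. -/
open nonZeroDivisors

def AlmostDedekind (R : Type*) [CommRing R] [IsDomain R] : Prop :=
  ∀ M : MaximalSpectrum R, IsDiscreteValuationRing (Localization.AtPrime M.asIdeal)

/-- The inverse topology on the maximal spectrum. -/
def invTop (R : Type*) [CommRing R] : TopologicalSpace (MaximalSpectrum R) :=
  .generateFrom {s | ∃ I : Ideal R, I.FG ∧ s = {M | I ≤ M.asIdeal}}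

open Topology

/-!
Clearing denominators, `d • x = n` with `x ∈ I` nonzero, shows that `ν_I` vanishes off
`V(d n)`, so the support of `ν_I` is a closed subset of `V(d n)` and it suffices that `V(b)` is
compact in the inverse topology for every `b ≠ 0`. For an ultrafilter `F` on `V(b)`, the
elements lying in `F`-almost every maximal ideal form a prime ideal containing `b`; since an
almost Dedekind domain has dimension one, this prime is maximal, and `F` converges to it.
-/

theorem AlmostDedekind.krullDimLE_one {R : Type*} [CommRing R] [IsDomain R]
    (hR : AlmostDedekind R) : Ring.KrullDimLE 1 R :=
  Ring.krullDimLE_of_isLocalization_maximal (fun P _ => Localization.AtPrime P)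
    fun P hP => by have := hR ⟨P, hP⟩; infer_instance

namespace MaximalSpectrum

variable {R : Type*} [CommRing R]

section InverseTopology

attribute [local instance] invTop

theorem isOpen_invTop_setOf_notMem (r : R) : IsOpen {M : MaximalSpectrum R | r ∉ M.asIdeal} := by
  -- `r ∉ M` iff `r` is a unit modulo the maximal ideal `M`
  have hunion : {M : MaximalSpectrum R | r ∉ M.asIdeal} =
      ⋃ c : R, {M | Ideal.span {c * r - 1} ≤ M.asIdeal} := by
    ext M
    simp only [Set.mem_iUnion, Ideal.span_singleton_le_iff_mem]
    constructor
    · intro hr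
      obtain ⟨c, i, hi, hci⟩ := M.isMaximal.exists_inv hr
      refine ⟨c, ?_⟩
      rw [show c * r - 1 = -i by linear_combination hci]
      exact M.asIdeal.neg_mem hi
    · rintro ⟨c, hc⟩ hr
      refine M.isMaximal.ne_top (M.asIdeal.eq_top_iff_one.2 ?_)
      simpa using M.asIdeal.sub_mem (M.asIdeal.mul_mem_left c hr) hc
  rw [hunion]
  exact isOpen_iUnion fun c =>
    TopologicalSpace.isOpen_generateFrom_of_mem ⟨_, Submodule.fg_span_singleton _, rfl⟩

theorem isClosed_invTop_setOf_mem (r : R) : IsClosed {M : MaximalSpectrum R | r ∈ M.asIdeal} :=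
  isOpen_compl_iff.1 (isOpen_invTop_setOf_notMem r)

def limitIdeal (F : Ultrafilter (MaximalSpectrum R)) : Ideal R where
  carrier := {r | ∀ᶠ M in (F : Filter (MaximalSpectrum R)), r ∈ M.asIdeal}
  add_mem' ha hb := Filter.Eventually.mono (ha.and hb) fun M h => M.asIdeal.add_mem h.1 h.2
  zero_mem' := .of_forall fun M => M.asIdeal.zero_mem
  smul_mem' c _ h := Filter.Eventually.mono h fun M h => M.asIdeal.mul_mem_left c h

theorem mem_limitIdeal {F : Ultrafilter (MaximalSpectrum R)} {r : R} :
    r ∈ limitIdeal F ↔ ∀ᶠ M in (F : Filter (MaximalSpectrum R)), r ∈ M.asIdeal :=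
  Iff.rfl

theorem limitIdeal_isPrime (F : Ultrafilter (MaximalSpectrum R)) : (limitIdeal F).IsPrime where
  ne_top' h := by
    obtain ⟨M, hM⟩ := (mem_limitIdeal.1 ((limitIdeal F).eq_top_iff_one.1 h)).exists
    exact M.isMaximal.ne_top (M.asIdeal.eq_top_iff_one.2 hM)
  mem_or_mem' h :=
    Ultrafilter.eventually_or.1 (h.mono fun M hM => M.isMaximal.isPrime.mem_or_mem hM)

theorem le_nhds_of_asIdeal_le_limitIdeal {F : Ultrafilter (MaximalSpectrum R)}
    {M₀ : MaximalSpectrum R} (h : M₀.asIdeal ≤ limitIdeal F) : (F : Filter _) ≤ 𝓝 M₀ := by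
  refine le_of_le_of_eq (le_iInf₂ ?_) TopologicalSpace.nhds_generateFrom.symm
  rintro _ ⟨hM₀, J, ⟨T, rfl⟩, rfl⟩
  have hT : ∀ t ∈ T, ∀ᶠ M in (F : Filter (MaximalSpectrum R)), t ∈ M.asIdeal :=
    fun t ht => h (hM₀ (Ideal.subset_span ht))
  exact Filter.le_principal_iff.2 <|
    ((Filter.eventually_all_finset T).2 hT).mono fun M hM => Ideal.span_le.2 hM

theorem isCompact_invTop_setOf_mem [IsDomain R] [Ring.KrullDimLE 1 R] {b : R} (hb : b ≠ 0) :
    IsCompact {M : MaximalSpectrum R | b ∈ M.asIdeal} := by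
  rw [isCompact_iff_ultrafilter_le_nhds]
  intro F hF
  have hbF : b ∈ limitIdeal F := Filter.le_principal_iff.1 hF
  have hF0 : limitIdeal F ≠ ⊥ := fun h => hb (by rwa [h, Ideal.mem_bot] at hbF)
  exact ⟨⟨_, (limitIdeal_isPrime F).isMaximal_of_ne_bot hF0⟩, hbF,
    le_nhds_of_asIdeal_le_limitIdeal le_rfl⟩

end InverseTopology

end MaximalSpectrum

section Valuation

variable {R K : Type*} [CommRing R] [Field K] [Algebra R K] {v : K → ℤ} {M : Ideal R}

theorem valuation_algebraMap_nonneg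
    (hv_int : ∀ x : R, x ≠ 0 → ∀ n : ℕ, ((n : ℤ) ≤ v (algebraMap R K x) ↔ x ∈ M ^ n))
    {r : R} (hr : r ≠ 0) : 0 ≤ v (algebraMap R K r) := by
  simpa using (hv_int r hr 0).2 (by simp)

theorem valuation_algebraMap_eq_zero
    (hv_int : ∀ x : R, x ≠ 0 → ∀ n : ℕ, ((n : ℤ) ≤ v (algebraMap R K x) ↔ x ∈ M ^ n))
    {r : R} (hrM : r ∉ M) : v (algebraMap R K r) = 0 := by
  have hr : r ≠ 0 := (ne_of_mem_of_not_mem M.zero_mem hrM).symm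
  have hlt : ¬ (1 : ℤ) ≤ v (algebraMap R K r) := fun h =>
    hrM (by simpa using (hv_int r hr 1).1 (by exact_mod_cast h))
  have := valuation_algebraMap_nonneg hv_int hr
  omega

theorem valuation_eq_of_smul_eq_algebraMap [IsDomain R] [IsFractionRing R K]
    (hv_mul : ∀ x y : K, x ≠ 0 → y ≠ 0 → v (x * y) = v x + v y)
    (hv_int : ∀ x : R, x ≠ 0 → ∀ n : ℕ, ((n : ℤ) ≤ v (algebraMap R K x) ↔ x ∈ M ^ n))
    {d m : R} {y : K} (hd : d ∉ M) (hy : y ≠ 0) (hm : algebraMap R K m = d • y) :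
    v y = v (algebraMap R K m) := by
  have hd0 : algebraMap R K d ≠ 0 := IsFractionRing.to_map_ne_zero_of_mem_nonZeroDivisors
    (mem_nonZeroDivisors_of_ne_zero (ne_of_mem_of_not_mem M.zero_mem hd).symm)
  rw [hm, Algebra.smul_def, hv_mul _ _ hd0 hy, valuation_algebraMap_eq_zero hv_int hd, zero_add]

theorem eq_zero_of_isLeast_valuation [IsDomain R] [IsFractionRing R K]
    (hv_mul : ∀ x y : K, x ≠ 0 → y ≠ 0 → v (x * y) = v x + v y)
    (hv_int : ∀ x : R, x ≠ 0 → ∀ n : ℕ, ((n : ℤ) ≤ v (algebraMap R K x) ↔ x ∈ M ^ n))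
    {I : FractionalIdeal R⁰ K} {ν₀ : ℤ}
    (hν : IsLeast (v '' {x : K | x ∈ I ∧ x ≠ 0}) ν₀)
    {d : R} (hdI : ∀ y ∈ I, IsLocalization.IsInteger R (d • y))
    {x : K} (hxI : x ∈ I) (hx0 : x ≠ 0) {n : R} (hn : algebraMap R K n = d • x)
    (hdn : d * n ∉ M) : ν₀ = 0 := by
  have hd : d ∉ M := fun h => hdn (M.mul_mem_right n h)
  have hnM : n ∉ M := fun h => hdn (M.mul_mem_left d h)
  have hle : ν₀ ≤ 0 := by
    have := hν.2 ⟨x, ⟨hxI, hx0⟩, rfl⟩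
    rwa [valuation_eq_of_smul_eq_algebraMap hv_mul hv_int hd hx0 hn,
      valuation_algebraMap_eq_zero hv_int hnM] at this
  have hge : 0 ≤ ν₀ := by
    obtain ⟨y, ⟨hyI, hy0⟩, rfl⟩ := hν.1
    obtain ⟨m, hm⟩ := hdI y hyI
    have hm0 : m ≠ 0 := by
      rintro rfl
      refine smul_ne_zero ?_ hy0 (hm.symm.trans (map_zero _))
      exact (ne_of_mem_of_not_mem M.zero_mem hd).symm
    rw [valuation_eq_of_smul_eq_algebraMap hv_mul hv_int hd hy0 hm]
    exact valuation_algebraMap_nonneg hv_int hm0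
  omega

end Valuation

/-- `v M` plays the valuation of the DVR `R_M`, so `ν M`, the least value of `v M` on the
nonzero elements of `I`, is the exponent `ν_I(M)` of `I R_M`. -/
theorem stmt8 {R : Type*} [CommRing R] [IsDomain R] (hR : AlmostDedekind R)
    (K : Type*) [Field K] [Algebra R K] [IsFractionRing R K]
    (v : MaximalSpectrum R → K → ℤ)
    (hv_mul : ∀ M : MaximalSpectrum R, ∀ x y : K, x ≠ 0 → y ≠ 0 →
      v M (x * y) = v M x + v M y)
    (hv_int : ∀ M : MaximalSpectrum R, ∀ x : R, x ≠ 0 →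
      ∀ n : ℕ, ((n : ℤ) ≤ v M (algebraMap R K x) ↔ x ∈ M.asIdeal ^ n))
    (I : FractionalIdeal R⁰ K) (hI : I ≠ 0)
    (ν : MaximalSpectrum R → ℤ)
    (hν : ∀ M : MaximalSpectrum R, IsLeast (v M '' {x : K | x ∈ I ∧ x ≠ 0}) (ν M)) :
    @IsCompact _ (invTop R) (@closure _ (invTop R) {M : MaximalSpectrum R | ν M ≠ 0}) := by
  let := invTop R
  have := hR.krullDimLE_one
  obtain ⟨d, hd, hdI⟩ := I.isFractional
  obtain ⟨x, hxI, hx0⟩ : ∃ x ∈ I, x ≠ 0 := by simpa [ne_eq, FractionalIdeal.eq_zero_iff] using hI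
  obtain ⟨n, hn⟩ := hdI x hxI
  have hdn : d * n ≠ 0 := by
    refine mul_ne_zero (nonZeroDivisors.ne_zero hd) ?_
    rintro rfl
    exact smul_ne_zero (nonZeroDivisors.ne_zero hd) hx0 (hn.symm.trans (map_zero _))
  have hsupp : {M : MaximalSpectrum R | ν M ≠ 0} ⊆ {M | d * n ∈ M.asIdeal} := fun M hM => by
    by_contra hdnM
    exact hM (eq_zero_of_isLeast_valuation (hv_mul M) (hv_int M) (hν M) hdI hxI hx0 hn hdnM)
  exact (MaximalSpectrum.isCompact_invTop_setOf_mem hdn).of_isClosed_subset isClosed_closure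
    (closure_minimal hsupp (MaximalSpectrum.isClosed_invTop_setOf_mem _))
end

section
/- Let R be an almost Dedekind domain and X a subset of Max(R) that is clopen and compact in the inverse topology. Then I := ⋂_{P ∈ X} P is a nonzero radical ideal of R with V(I) ∩ Max(R) = X. -/
/-!
In the inverse topology the sets `V(K)` with `K` finitely generated form a basis of open sets.
Around each point `M` of the open set `X` pick such a `V(K_M) ⊆ X`, enlarging `K_M` by a nonzero
element of `M` (maximal ideals are nonzero because the localizations are DVRs, not fields).
Compactness leaves finitely many of them, and then `X = V(J)` for the nonzero ideal
`J = ∏ K_M`, since a maximal ideal contains a finite product iff it contains a factor.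
Hence `J ≤ ⋂_{P ∈ X} P`, which is therefore nonzero, and `V(⋂_{P ∈ X} P) = X`.
-/

section

variable {R : Type*} [CommRing R]

lemma Ideal.ne_bot_of_isDiscreteValuationRing_atPrime [IsDomain R] {P : Ideal R} [P.IsPrime]
    [IsDiscreteValuationRing (Localization.AtPrime P)] : P ≠ ⊥ := by
  rintro rfl
  apply IsDiscreteValuationRing.not_a_field (Localization.AtPrime (⊥ : Ideal R))
  rw [← Localization.AtPrime.map_eq_maximalIdeal, Ideal.map_bot]

lemma AlmostDedekind.asIdeal_ne_bot [IsDomain R] (hR : AlmostDedekind R) (M : MaximalSpectrum R) :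
    M.asIdeal ≠ ⊥ :=
  have := hR M
  Ideal.ne_bot_of_isDiscreteValuationRing_atPrime

namespace invTop

lemma isOpen_setOf_le {I : Ideal R} (hI : I.FG) :
    @IsOpen _ (invTop R) {M : MaximalSpectrum R | I ≤ M.asIdeal} :=
  TopologicalSpace.GenerateOpen.basic _ ⟨I, hI, rfl⟩

lemma exists_fg_le_of_isOpen {U : Set (MaximalSpectrum R)} (hU : @IsOpen _ (invTop R) U)
    {M : MaximalSpectrum R} (hM : M ∈ U) :
    ∃ I : Ideal R, I.FG ∧ I ≤ M.asIdeal ∧ {N : MaximalSpectrum R | I ≤ N.asIdeal} ⊆ U := by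
  induction hU generalizing M with
  | basic s hs =>
    obtain ⟨I, hI, rfl⟩ := hs
    exact ⟨I, hI, hM, subset_rfl⟩
  | univ => exact ⟨⊥, Submodule.fg_bot, bot_le, Set.subset_univ _⟩
  | inter s t _ _ ihs iht =>
    obtain ⟨I, hIfg, hIM, hIs⟩ := ihs hM.1
    obtain ⟨J, hJfg, hJM, hJt⟩ := iht hM.2
    exact ⟨I ⊔ J, Submodule.FG.sup hIfg hJfg, sup_le hIM hJM,
      fun _ hN => ⟨hIs (le_sup_left.trans (α := Ideal R) hN),
        hJt (le_sup_right.trans (α := Ideal R) hN)⟩⟩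
  | sUnion S _ ih =>
    obtain ⟨s, hsS, hMs⟩ := hM
    obtain ⟨I, hIfg, hIM, hIs⟩ := ih s hsS hMs
    exact ⟨I, hIfg, hIM, fun _ hN => ⟨s, hsS, hIs hN⟩⟩

lemma exists_fg_mem_le_of_isOpen {U : Set (MaximalSpectrum R)} (hU : @IsOpen _ (invTop R) U)
    {M : MaximalSpectrum R} (hM : M ∈ U) {a : R} (ha : a ∈ M.asIdeal) :
    ∃ I : Ideal R, I.FG ∧ a ∈ I ∧ I ≤ M.asIdeal ∧ {N : MaximalSpectrum R | I ≤ N.asIdeal} ⊆ U := by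
  obtain ⟨I, hIfg, hIM, hIU⟩ := exists_fg_le_of_isOpen hU hM
  refine ⟨I ⊔ Ideal.span {a}, Submodule.FG.sup hIfg (Submodule.fg_span_singleton a),
    Ideal.mem_sup_right (Ideal.mem_span_singleton_self a),
    sup_le hIM ((Ideal.span_singleton_le_iff_mem _).mpr ha),
    fun _ hN => hIU (le_sup_left.trans (α := Ideal R) hN)⟩

lemma exists_ne_bot_eq_setOf_le [IsDomain R] {X : Set (MaximalSpectrum R)}
    (hXo : @IsOpen _ (invTop R) X) (hXc : @IsCompact _ (invTop R) X)
    (hne : ∀ M ∈ X, M.asIdeal ≠ ⊥) :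
    ∃ J : Ideal R, J ≠ ⊥ ∧ X = {N : MaximalSpectrum R | J ≤ N.asIdeal} := by
  let := invTop R
  have hbasic : ∀ M ∈ X, ∃ K : Ideal R, K.FG ∧ K ≠ ⊥ ∧ K ≤ M.asIdeal ∧
      {N : MaximalSpectrum R | K ≤ N.asIdeal} ⊆ X := by
    intro M hM
    obtain ⟨a, haM, ha0⟩ := Submodule.exists_mem_ne_zero_of_ne_bot (hne M hM)
    obtain ⟨K, hKfg, haK, hKM, hKX⟩ := exists_fg_mem_le_of_isOpen hXo hM haM
    exact ⟨K, hKfg, fun h => ha0 (by simpa [h] using haK), hKM, hKX⟩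
  choose! K hKfg hK0 hKM hKX using hbasic
  obtain ⟨t, ht⟩ := hXc.elim_finite_subcover (fun M : X => {N | K M ≤ N.asIdeal})
    (fun M => isOpen_setOf_le (hKfg M M.2)) fun M hM => Set.mem_iUnion.mpr ⟨⟨M, hM⟩, hKM M hM⟩
  refine ⟨∏ M ∈ t, K M, Finset.prod_ne_zero_iff.mpr fun M _ => hK0 M M.2, ?_⟩
  ext N
  constructor
  · intro hN
    obtain ⟨M, hMt, hMN⟩ := Set.mem_iUnion₂.mp (ht hN)
    exact (Ideal.le_of_dvd (Finset.dvd_prod_of_mem _ hMt)).trans hMN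
  · intro hN
    obtain ⟨M, -, hMN⟩ := (N.isMaximal.isPrime.prod_le).mp hN
    exact hKX M M.2 hMN

end invTop

namespace MaximalSpectrum

lemma isRadical_biInf_asIdeal (X : Set (MaximalSpectrum R)) : (⨅ P ∈ X, P.asIdeal).IsRadical :=
  Ideal.isRadical_iInf _ fun P => Ideal.isRadical_iInf _ fun _ => P.isMaximal.isPrime.isRadical

lemma le_biInf_asIdeal {X : Set (MaximalSpectrum R)} {J : Ideal R}
    (hX : X ⊆ {N : MaximalSpectrum R | J ≤ N.asIdeal}) : J ≤ ⨅ P ∈ X, P.asIdeal :=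
  le_iInf₂ fun _ hP => hX hP

lemma setOf_biInf_le_eq {X : Set (MaximalSpectrum R)} {J : Ideal R}
    (hX : X = {N : MaximalSpectrum R | J ≤ N.asIdeal}) :
    {M : MaximalSpectrum R | (⨅ P ∈ X, P.asIdeal) ≤ M.asIdeal} = X :=
  subset_antisymm (fun _ hN => hX.superset ((le_biInf_asIdeal hX.subset).trans hN))
    fun _ hN => biInf_le (fun P : MaximalSpectrum R => P.asIdeal) hN

end MaximalSpectrum

end

/-- Let `R` be an almost Dedekind domain and `X ⊆ Max(R)` clopen and compact in the
inverse topology.  Then `I := ⋂_{P ∈ X} P` is a nonzero radical ideal with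
`V(I) ∩ Max(R) = X`. -/
theorem stmt12 {R : Type*} [CommRing R] [IsDomain R] (hR : AlmostDedekind R)
    (X : Set (MaximalSpectrum R))
    (hclopen : @IsClopen _ (invTop R) X) (hcomp : @IsCompact _ (invTop R) X) :
    (⨅ P ∈ X, P.asIdeal) ≠ ⊥ ∧ (⨅ P ∈ X, P.asIdeal).IsRadical ∧
      {M : MaximalSpectrum R | (⨅ P ∈ X, P.asIdeal) ≤ M.asIdeal} = X := by
  obtain ⟨J, hJ0, hXJ⟩ := invTop.exists_ne_bot_eq_setOf_le
    (@IsClopen.isOpen _ (invTop R) _ hclopen) hcomp fun M _ => hR.asIdeal_ne_bot M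
  have hJle := MaximalSpectrum.le_biInf_asIdeal hXJ.subset
  exact ⟨fun h => hJ0 (le_bot_iff.mp (h ▸ hJle)), MaximalSpectrum.isRadical_biInf_asIdeal X,
    MaximalSpectrum.setOf_biInf_le_eq hXJ⟩
end

section
/- Let R be an almost Dedekind domain and I a nonzero integral ideal of R. Then ν_I : Max(R) → ℤ is continuous (inverse topology, discrete ℤ) if and only if I = J₁ ⋯ J_k for some radical ideals J₁ ⊆ ⋯ ⊆ J_k each of which has continuous ν_{J_i}, if and only if I is a finite product of radical ideals with continuous associated maps. -/
/-!
In an almost Dedekind domain `R`, a nonzero ideal `J` satisfies `J R_M = (M R_M)^(ν J M)` at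
every maximal ideal `M`; hence `ν` is additive on products, an ideal is determined by its `ν`,
and a nonzero radical ideal `J` has `ν J` equal to the indicator function of `V(J)`.
Nonzero primes are maximal, so for `I ≠ 0` the set `V(I)` is compact in the inverse topology
(Oka's criterion shows that a cover by sets `V(B)`, `B` finitely generated, has a finite
subcover), and its clopen subsets are of the form `V(B)` with `B` finitely generated.
If `ν I` is continuous, it is therefore bounded by some `k` and each level set
`{M | i < ν I M}` is a clopen subset of `V(I)`; the radical ideals `J i` vanishing exactly there
increase with `i`, have continuous `ν`, and `ν I = ∑ i < k, ν (J i)`, so `I = ∏ i < k, J i`.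
Conversely, `ν` of a finite product is the finite sum of the `ν`'s, which is continuous.
-/

open IsLocalRing Topology

section Localization

variable {R : Type*} [CommRing R]

theorem Ideal.le_pow_iff_map_le_maximalIdeal_pow (p : Ideal R) [p.IsMaximal] {J : Ideal R}
    (n : ℕ) : J ≤ p ^ n ↔ J.map (algebraMap R (Localization.AtPrime p)) ≤
      maximalIdeal (Localization.AtPrime p) ^ n := by
  rw [← IsLocalization.AtPrime.under_maximalIdeal_pow p (Localization.AtPrime p) n]
  exact Ideal.map_le_iff_le_comap.symm

theorem Ideal.map_algebraMap_localization_ne_bot [IsDomain R] (p : Ideal R) [p.IsPrime]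
    {J : Ideal R} (hJ : J ≠ ⊥) : J.map (algebraMap R (Localization.AtPrime p)) ≠ ⊥ :=
  (Ideal.map_eq_bot_iff_of_injective
    (IsLocalization.injective _ p.primeCompl_le_nonZeroDivisors)).not.mpr hJ

end Localization

namespace IsDiscreteValuationRing

variable {A : Type*} [CommRing A] [IsDomain A] [IsDiscreteValuationRing A]

theorem maximalIdeal_pow_strictAnti :
    StrictAnti (IsLocalRing.maximalIdeal A ^ · : ℕ → Ideal A) :=
  Ideal.pow_right_strictAnti _ (not_a_field A) (IsLocalRing.maximalIdeal.isMaximal A).ne_top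

theorem maximalIdeal_pow_le_pow_iff {a b : ℕ} :
    IsLocalRing.maximalIdeal A ^ a ≤ IsLocalRing.maximalIdeal A ^ b ↔ b ≤ a :=
  maximalIdeal_pow_strictAnti.le_iff_ge

theorem maximalIdeal_pow_inj {a b : ℕ} :
    IsLocalRing.maximalIdeal A ^ a = IsLocalRing.maximalIdeal A ^ b ↔ a = b :=
  maximalIdeal_pow_strictAnti.injective.eq_iff

theorem exists_eq_maximalIdeal_pow {I : Ideal A} (hI : I ≠ ⊥) :
    ∃ n : ℕ, I = IsLocalRing.maximalIdeal A ^ n :=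
  exists_maximalIdeal_pow_eq_of_principal A (IsPrincipalIdealRing.principal _) I hI

end IsDiscreteValuationRing

namespace AlmostDedekind

variable {R : Type*} [CommRing R] [IsDomain R] (hR : AlmostDedekind R)
include hR

theorem isDiscreteValuationRing (p : Ideal R) [hp : p.IsMaximal] :
    IsDiscreteValuationRing (Localization.AtPrime p) :=
  hR ⟨p, hp⟩

theorem map_eq_maximalIdeal_pow_iff (p : Ideal R) [p.IsMaximal] {J : Ideal R} (hJ : J ≠ ⊥)
    (n : ℕ) : J.map (algebraMap R (Localization.AtPrime p)) =
      maximalIdeal (Localization.AtPrime p) ^ n ↔ J ≤ p ^ n ∧ ¬ J ≤ p ^ (n + 1) := by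
  have := hR.isDiscreteValuationRing p
  obtain ⟨c, hc⟩ := IsDiscreteValuationRing.exists_eq_maximalIdeal_pow
    (Ideal.map_algebraMap_localization_ne_bot p hJ)
  rw [Ideal.le_pow_iff_map_le_maximalIdeal_pow p, Ideal.le_pow_iff_map_le_maximalIdeal_pow p, hc,
    IsDiscreteValuationRing.maximalIdeal_pow_le_pow_iff,
    IsDiscreteValuationRing.maximalIdeal_pow_le_pow_iff,
    IsDiscreteValuationRing.maximalIdeal_pow_inj]
  omega

theorem isMaximal_of_isPrime {P : Ideal R} [P.IsPrime] (hP : P ≠ ⊥) : P.IsMaximal := by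
  obtain ⟨N, hN, hPN⟩ := Ideal.exists_le_maximal P Ideal.IsPrime.ne_top'
  have := hR.isDiscreteValuationRing N
  have hmap : (P.map (algebraMap R (Localization.AtPrime N))).IsPrime :=
    Ideal.isPrime_map_of_isLocalizationAtPrime N hPN
  have hmax : P.map (algebraMap R (Localization.AtPrime N)) = maximalIdeal _ :=
    eq_maximalIdeal (hmap.isMaximal (Ideal.map_algebraMap_localization_ne_bot N hP))
  rwa [← Ideal.under_map_of_isLocalizationAtPrime N (S := Localization.AtPrime N) hPN, hmax,
    IsLocalization.AtPrime.under_maximalIdeal (Localization.AtPrime N) N]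

end AlmostDedekind

section IdealOrder

variable {R : Type*} [CommRing R]

def IsIdealOrder (ν : Ideal R → MaximalSpectrum R → ℤ) : Prop :=
  ∀ J : Ideal R, J ≠ ⊥ → ∀ M : MaximalSpectrum R,
    0 ≤ ν J M ∧ J ≤ M.asIdeal ^ (ν J M).toNat ∧ ¬ J ≤ M.asIdeal ^ ((ν J M).toNat + 1)

namespace IsIdealOrder

variable {ν : Ideal R → MaximalSpectrum R → ℤ} (hν : IsIdealOrder ν) {J K : Ideal R}
include hν

theorem apply_pos_iff (hJ : J ≠ ⊥) (M : MaximalSpectrum R) :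
    0 < ν J M ↔ J ≤ M.asIdeal := by
  obtain ⟨h0, hle, hnle⟩ := hν J hJ M
  refine ⟨fun hpos => hle.trans (Ideal.pow_le_self (by omega)), fun hJM => ?_⟩
  by_contra! hnpos
  rw [show (ν J M).toNat = 0 by omega, zero_add, pow_one] at hnle
  exact hnle hJM

theorem apply_eq_zero_iff (hJ : J ≠ ⊥) (M : MaximalSpectrum R) :
    ν J M = 0 ↔ ¬ J ≤ M.asIdeal := by
  rw [← hν.apply_pos_iff hJ M]
  have := (hν J hJ M).1
  omega

variable [IsDomain R] (hR : AlmostDedekind R)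
include hR

theorem map_eq (hJ : J ≠ ⊥) (M : MaximalSpectrum R) :
    J.map (algebraMap R (Localization.AtPrime M.asIdeal)) =
      maximalIdeal (Localization.AtPrime M.asIdeal) ^ (ν J M).toNat :=
  (hR.map_eq_maximalIdeal_pow_iff M.asIdeal hJ _).mpr (hν J hJ M).2

theorem apply_eq_iff (hJ : J ≠ ⊥) (M : MaximalSpectrum R) (n : ℕ) :
    ν J M = n ↔ J.map (algebraMap R (Localization.AtPrime M.asIdeal)) =
      maximalIdeal (Localization.AtPrime M.asIdeal) ^ n := by
  have := hR.isDiscreteValuationRing M.asIdeal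
  rw [hν.map_eq hR hJ M, IsDiscreteValuationRing.maximalIdeal_pow_inj]
  have := (hν J hJ M).1
  omega

theorem apply_mul (hJ : J ≠ ⊥) (hK : K ≠ ⊥) (M : MaximalSpectrum R) :
    ν (J * K) M = ν J M + ν K M := by
  have hJK : J * K ≠ ⊥ := by simp [hJ, hK]
  have h := (hν.apply_eq_iff hR hJK M ((ν J M).toNat + (ν K M).toNat)).mpr (by
    rw [Ideal.map_mul, hν.map_eq hR hJ, hν.map_eq hR hK, pow_add])
  have := (hν J hJ M).1
  have := (hν K hK M).1
  omega

theorem apply_top (M : MaximalSpectrum R) : ν ⊤ M = 0 :=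
  (hν.apply_eq_iff hR top_ne_bot M 0).mpr (by rw [Ideal.map_top, pow_zero, Ideal.one_eq_top])

theorem apply_prod {ι : Type*} (s : Finset ι) {J : ι → Ideal R}
    (hJ : ∀ i ∈ s, J i ≠ ⊥) (M : MaximalSpectrum R) :
    ν (∏ i ∈ s, J i) M = ∑ i ∈ s, ν (J i) M := by
  induction s using Finset.cons_induction with
  | empty => simpa [Ideal.one_eq_top] using hν.apply_top hR M
  | cons i s hi ih =>
    have hs : ∏ j ∈ s, J j ≠ ⊥ :=
      Finset.prod_ne_zero_iff.mpr fun j hj => hJ j (by simp [hj])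
    rw [Finset.prod_cons, Finset.sum_cons, hν.apply_mul hR (hJ i (by simp)) hs,
      ih fun j hj => hJ j (by simp [hj])]

theorem apply_eq_one_of_isRadical (hJ : J ≠ ⊥) (hrad : J.IsRadical) {M : MaximalSpectrum R}
    (hJM : J ≤ M.asIdeal) : ν J M = 1 := by
  have := hR.isDiscreteValuationRing M.asIdeal
  have hpos := (hν.apply_pos_iff hJ M).mpr hJM
  refine (hν.apply_eq_iff hR hJ M 1).mpr ?_
  -- a radical ideal stays radical in the localization, and the only radical power of `m` is `m`
  rw [← hrad.radical, IsLocalization.map_radical M.asIdeal.primeCompl, hν.map_eq hR hJ M,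
    Ideal.radical_pow _ (by omega), (maximalIdeal.isMaximal _).isPrime.radical, pow_one]

theorem eq_of_forall_apply_eq (hJ : J ≠ ⊥) (hK : K ≠ ⊥)
    (h : ∀ M, ν J M = ν K M) : J = K :=
  Ideal.eq_of_localization_maximal fun P hP => by
    rw [hν.map_eq hR hJ ⟨P, hP⟩, hν.map_eq hR hK ⟨P, hP⟩, h]

end IsIdealOrder

end IdealOrder

section InverseTopology

variable {R : Type*} [CommRing R]

theorem Ideal.FG.multiset_prod {s : Multiset (Ideal R)} (hs : ∀ I ∈ s, I.FG) : s.prod.FG :=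
  Multiset.prod_induction _ s (fun _ _ => Ideal.FG.mul)
    (by rw [Ideal.one_eq_top]; exact Ideal.fg_top R) hs

theorem Ideal.exists_multiset_prod_le_of_forall_isPrime {ι : Type*} {B : ι → Ideal R}
    (hB : ∀ i, (B i).FG) {I : Ideal R}
    (hI : ∀ P : Ideal R, P.IsPrime → I ≤ P → ∃ i, B i ≤ P) :
    ∃ s : Multiset ι, (s.map B).prod ≤ I := by
  let Q : Ideal R → Prop := fun J => I ≤ J → ∃ s : Multiset ι, (s.map B).prod ≤ J
  have hQ : Ideal.IsOka Q := by
    refine ⟨fun _ => ⟨0, by simp⟩, fun {J a} hsup hcolon hIJ => ?_⟩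
    obtain ⟨s, hs⟩ := hsup (hIJ.trans le_sup_left)
    obtain ⟨t, ht⟩ := hcolon (hIJ.trans Ideal.le_colon)
    refine ⟨s + t, ?_⟩
    rw [Multiset.map_add, Multiset.prod_add]
    calc _ ≤ (J ⊔ Ideal.span {a}) * J.colon (Ideal.span {a}) := Ideal.mul_mono hs ht
      _ ≤ J := by
        rw [Ideal.sup_mul]
        refine sup_le Ideal.mul_le_left (Ideal.span_singleton_mul_le_iff.mpr fun z hz => ?_)
        rw [mul_comm]
        exact Ideal.mem_colon_span_singleton.mp hz
  refine hQ.forall_of_forall_prime' (fun C hC hchain J hJC hsup => ?_) (fun P hP hIP => ?_) I le_rfl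
  · obtain ⟨s, hs⟩ := hsup ((Classical.not_imp.mp (hC hJC)).1.trans (le_sSup hJC))
    have hcompact := (Submodule.fg_iff_compact _).mp
      (Ideal.FG.multiset_prod (s := s.map B) (by simpa using fun i _ => hB i))
    obtain ⟨K, hKC, hK⟩ := (CompleteLattice.isCompactElement_iff_le_of_directed_sSup_le _ _).mp
      hcompact C ⟨J, hJC⟩ hchain.directedOn hs
    exact ⟨K, hKC, fun _ => ⟨s, hK⟩⟩
  · obtain ⟨i, hi⟩ := hI P hP hIP
    exact ⟨{i}, by simpa using hi⟩

theorem isTopologicalBasis_invTop :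
    @TopologicalSpace.IsTopologicalBasis _ (invTop R)
      {s | ∃ I : Ideal R, I.FG ∧ s = {M | I ≤ M.asIdeal}} := by
  refine @TopologicalSpace.IsTopologicalBasis.mk _ (invTop R) _ ?_ ?_ rfl
  · rintro _ ⟨I, hI, rfl⟩ _ ⟨J, hJ, rfl⟩ M hM
    exact ⟨_, ⟨I ⊔ J, Submodule.FG.sup hI hJ, rfl⟩,
      show I ⊔ J ≤ M.asIdeal from sup_le hM.1 hM.2,
      fun N (hN : I ⊔ J ≤ N.asIdeal) =>
        show I ≤ N.asIdeal ∧ J ≤ N.asIdeal from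
          ⟨le_sup_left.trans hN, le_sup_right.trans hN⟩⟩
  · exact Set.eq_univ_of_forall fun M =>
      ⟨_, ⟨⊥, Submodule.fg_bot, rfl⟩, show ⊥ ≤ M.asIdeal from bot_le⟩

theorem isOpen_invTop_setOf_le {B : Ideal R} (hB : B.FG) :
    IsOpen[invTop R] {M : MaximalSpectrum R | B ≤ M.asIdeal} :=
  TopologicalSpace.isOpen_generateFrom_of_mem ⟨B, hB, rfl⟩

theorem exists_fg_eq_setOf_le_of_isCompact_of_isOpen {S : Set (MaximalSpectrum R)}
    (hSc : @IsCompact _ (invTop R) S) (hSo : IsOpen[invTop R] S) :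
    ∃ B : Ideal R, B.FG ∧ S = {M | B ≤ M.asIdeal} := by
  classical
  have hbasic : ∀ M ∈ S, ∃ B : Ideal R,
      B.FG ∧ B ≤ M.asIdeal ∧ {N : MaximalSpectrum R | B ≤ N.asIdeal} ⊆ S := by
    intro M hM
    obtain ⟨_, ⟨B, hB, rfl⟩, hMB, hBS⟩ :=
      @TopologicalSpace.IsTopologicalBasis.exists_subset_of_mem_open _ (invTop R) _
        isTopologicalBasis_invTop _ _ hM hSo
    exact ⟨B, hB, hMB, hBS⟩
  choose! B hBfg hBM hBS using hbasic
  obtain ⟨t, htS, hSt⟩ := @IsCompact.elim_nhds_subcover _ (invTop R) _ hSc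
    (fun M => {N | B M ≤ N.asIdeal}) fun M hM =>
      @IsOpen.mem_nhds _ (invTop R) _ _ (isOpen_invTop_setOf_le (hBfg M hM)) (hBM M hM)
  refine ⟨∏ M ∈ t, B M, Ideal.FG.multiset_prod (by simpa using fun M hM => hBfg M (htS M hM)),
    Set.Subset.antisymm (fun N hN => ?_) fun N hN => ?_⟩
  · obtain ⟨M, hMt, hN⟩ := Set.mem_iUnion₂.mp (hSt hN)
    exact (Ideal.prod_le_inf.trans (Finset.inf_le hMt)).trans hN
  · obtain ⟨M, hMt, hN⟩ := N.isMaximal.isPrime.prod_le.mp hN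
    exact hBS M (htS M hMt) hN

theorem isCompact_invTop_setOf_le {I : Ideal R}
    (hI : ∀ P : Ideal R, P.IsPrime → I ≤ P → P.IsMaximal) :
    @IsCompact _ (invTop R) {M : MaximalSpectrum R | I ≤ M.asIdeal} := by
  classical
  refine @isCompact_generateFrom _ (invTop R) _ rfl _ fun 𝒰 h𝒰 hcover => ?_
  choose B hBfg hB using fun U : 𝒰 => h𝒰 U.2
  obtain ⟨s, hs⟩ := Ideal.exists_multiset_prod_le_of_forall_isPrime hBfg (I := I)
    fun P hP hIP => by
      obtain ⟨U, hU𝒰, hPU⟩ :=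
        hcover (show (⟨P, hI P hP hIP⟩ : MaximalSpectrum R) ∈ _ from hIP)
      rw [show U = _ from hB ⟨U, hU𝒰⟩] at hPU
      exact ⟨⟨U, hU𝒰⟩, hPU⟩
  refine ⟨(↑) '' (s.toFinset : Set 𝒰), by simp, s.toFinset.finite_toSet.image _,
    fun M hM => ?_⟩
  obtain ⟨U, hUs, hUM⟩ := (M.isMaximal.isPrime.multiset_prod_map_le B).mp (hs.trans hM)
  exact ⟨U, ⟨U, by simpa using hUs, rfl⟩, by rw [hB U]; exact hUM⟩

end InverseTopology

theorem isClopen_preimage_of_continuous_bot {X Y : Type*} {t : TopologicalSpace X} {f : X → Y}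
    (hf : Continuous[t, ⊥] f) (A : Set Y) : @IsClopen X t (f ⁻¹' A) :=
  @IsClopen.preimage X Y t ⊥ A (@isClopen_discrete Y ⊥ (discreteTopology_bot Y) A) f hf

theorem Fin.sum_ite_val_lt {k : ℕ} {v : ℤ} (h0 : 0 ≤ v) (hv : v ≤ k) :
    ∑ i : Fin k, (if (i : ℤ) < v then (1 : ℤ) else 0) = v := by
  lift v to ℕ using h0
  simp only [Nat.cast_lt, Finset.sum_boole, Fin.card_filter_val_lt,
    min_eq_right (by omega : v ≤ k)]

namespace MaximalSpectrum

variable {R : Type*} [CommRing R]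

def vanishingIdeal (S : Set (MaximalSpectrum R)) : Ideal R :=
  ⨅ M ∈ S, M.asIdeal

theorem isRadical_vanishingIdeal (S : Set (MaximalSpectrum R)) : (vanishingIdeal S).IsRadical :=
  Ideal.isRadical_iInf _ fun M => Ideal.isRadical_iInf _ fun _ => M.isMaximal.isPrime.isRadical

theorem le_vanishingIdeal_iff {S : Set (MaximalSpectrum R)} {I : Ideal R} :
    I ≤ vanishingIdeal S ↔ ∀ M ∈ S, I ≤ M.asIdeal :=
  le_iInf₂_iff

theorem vanishingIdeal_anti_mono {S T : Set (MaximalSpectrum R)} (h : S ⊆ T) :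
    vanishingIdeal T ≤ vanishingIdeal S :=
  biInf_mono h

theorem vanishingIdeal_setOf_le_le_iff {B : Ideal R} {M : MaximalSpectrum R} :
    vanishingIdeal {N | B ≤ N.asIdeal} ≤ M.asIdeal ↔ B ≤ M.asIdeal :=
  ⟨(le_vanishingIdeal_iff.mpr fun _ h => h).trans, fun h => iInf₂_le M h⟩

end MaximalSpectrum

open MaximalSpectrum

namespace AlmostDedekind

variable {R : Type*} [CommRing R] [IsDomain R] (hR : AlmostDedekind R) {I : Ideal R}
include hR

theorem isCompact_invTop_setOf_le (hI : I ≠ ⊥) :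
    @IsCompact _ (invTop R) {M : MaximalSpectrum R | I ≤ M.asIdeal} :=
  _root_.isCompact_invTop_setOf_le fun _ _ hIP =>
    hR.isMaximal_of_isPrime (ne_bot_of_le_ne_bot hI hIP)

theorem vanishingIdeal_le_iff_of_isClopen (hI : I ≠ ⊥) {S : Set (MaximalSpectrum R)}
    (hS : @IsClopen _ (invTop R) S) (hSI : S ⊆ {M | I ≤ M.asIdeal}) (M : MaximalSpectrum R) :
    vanishingIdeal S ≤ M.asIdeal ↔ M ∈ S := by
  have hSc : @IsCompact _ (invTop R) S :=
    @IsCompact.of_isClosed_subset _ (invTop R) _ _ (hR.isCompact_invTop_setOf_le hI) hS.1 hSI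
  obtain ⟨B, -, rfl⟩ := exists_fg_eq_setOf_le_of_isCompact_of_isOpen hSc hS.2
  exact vanishingIdeal_setOf_le_le_iff

end AlmostDedekind

namespace IsIdealOrder

variable {R : Type*} [CommRing R] [IsDomain R] (hR : AlmostDedekind R)
  {ν : Ideal R → MaximalSpectrum R → ℤ} (hν : IsIdealOrder ν) {I : Ideal R}
include hR hν

theorem exists_apply_le_of_continuous (hI : I ≠ ⊥) (hc : Continuous[invTop R, ⊥] (ν I)) :
    ∃ k : ℕ, ∀ M, ν I M ≤ k := by
  -- `ν I` vanishes off `V(I)`, and it takes finitely many values on the compact set `V(I)`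
  have hfin : (ν I '' {M | I ≤ M.asIdeal}).Finite := @IsCompact.finite_of_discrete ℤ ⊥ _ _
    (@IsCompact.image _ _ (invTop R) ⊥ _ _ (hR.isCompact_invTop_setOf_le hI) hc)
  obtain ⟨k, hk⟩ := hfin.bddAbove
  refine ⟨k.toNat, fun M => ?_⟩
  by_cases hIM : I ≤ M.asIdeal
  · have := hk ⟨M, hIM, rfl⟩
    omega
  · rw [(hν.apply_eq_zero_iff hI M).mpr hIM]
    omega

theorem continuous_of_isRadical (hI : I ≠ ⊥) (hrad : I.IsRadical)
    (hV : @IsClopen _ (invTop R) {M | I ≤ M.asIdeal}) : Continuous[invTop R, ⊥] (ν I) := by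
  have hind : ν I = (fun b : Bool => if b then (1 : ℤ) else 0) ∘
      Set.boolIndicator {M | I ≤ M.asIdeal} := by
    funext M
    by_cases hIM : I ≤ M.asIdeal
    · simp [Set.boolIndicator, hIM, hν.apply_eq_one_of_isRadical hR hI hrad hIM]
    · simp [Set.boolIndicator, hIM, (hν.apply_eq_zero_iff hI M).mpr hIM]
  rw [hind]
  exact @Continuous.comp _ _ _ (invTop R) _ ⊥ _ _ (@continuous_of_discreteTopology _ _ _ _ ⊥ _)
    ((@continuous_boolIndicator_iff_isClopen _ (invTop R) _).mpr hV)

theorem continuous_of_eq_prod (hI : I ≠ ⊥) {ι : Type*} {s : Finset ι} {J : ι → Ideal R}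
    (hIJ : I = ∏ i ∈ s, J i) (hJ : ∀ i ∈ s, Continuous[invTop R, ⊥] (ν (J i))) :
    Continuous[invTop R, ⊥] (ν I) := by
  have hJne : ∀ i ∈ s, J i ≠ ⊥ := Finset.prod_ne_zero_iff.mp (hIJ ▸ hI)
  have hsum : ν I = fun M => ∑ i ∈ s, ν (J i) M := funext (hIJ ▸ hν.apply_prod hR s hJne)
  rw [hsum]
  exact @continuous_finsetSum _ _ _ (invTop R) ⊥ _ _ _ s hJ

theorem exists_monotone_isRadical_prod_eq (hI : I ≠ ⊥) (hc : Continuous[invTop R, ⊥] (ν I)) :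
    ∃ (k : ℕ) (J : Fin k → Ideal R), Monotone J ∧
      (∀ i, (J i).IsRadical ∧ Continuous[invTop R, ⊥] (ν (J i))) ∧ I = ∏ i, J i := by
  obtain ⟨k, hk⟩ := hν.exists_apply_le_of_continuous hR hI hc
  let L : ℕ → Set (MaximalSpectrum R) := fun i => ν I ⁻¹' {n | (i : ℤ) < n}
  have hL : ∀ i, @IsClopen _ (invTop R) (L i) := fun i =>
    isClopen_preimage_of_continuous_bot hc _
  have hLI : ∀ i, L i ⊆ {M | I ≤ M.asIdeal} := fun i M (hM : (i : ℤ) < ν I M) =>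
    (hν.apply_pos_iff hI M).mp (by omega)
  let J : Fin k → Ideal R := fun i => vanishingIdeal (L i)
  have hJne : ∀ i, J i ≠ ⊥ := fun i =>
    ne_bot_of_le_ne_bot hI (le_vanishingIdeal_iff.mpr (hLI i))
  have hJV : ∀ i M, J i ≤ M.asIdeal ↔ M ∈ L i := fun i =>
    hR.vanishingIdeal_le_iff_of_isClopen hI (hL i) (hLI i)
  have hνJ : ∀ i M, ν (J i) M = if (i : ℤ) < ν I M then 1 else 0 := by
    intro i M
    split_ifs with hi
    · exact hν.apply_eq_one_of_isRadical hR (hJne i) (isRadical_vanishingIdeal _)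
        ((hJV i M).mpr hi)
    · exact (hν.apply_eq_zero_iff (hJne i) M).mpr fun h => hi ((hJV i M).mp h)
  have hmono : Monotone J := fun i j (hij : (i : ℕ) ≤ j) =>
    vanishingIdeal_anti_mono fun M (hM : (j : ℤ) < ν I M) => show (i : ℤ) < ν I M by omega
  have hcont : ∀ i, Continuous[invTop R, ⊥] (ν (J i)) := fun i =>
    hν.continuous_of_isRadical hR (hJne i) (isRadical_vanishingIdeal _)
      ((Set.ext (hJV i) : {M | J i ≤ M.asIdeal} = L i) ▸ hL i)
  have hprod : ∏ i, J i ≠ ⊥ := Finset.prod_ne_zero_iff.mpr fun i _ => hJne i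
  refine ⟨k, J, hmono, fun i => ⟨isRadical_vanishingIdeal _, hcont i⟩,
    hν.eq_of_forall_apply_eq hR hI hprod fun M => ?_⟩
  rw [hν.apply_prod hR _ fun i _ => hJne i, Finset.sum_congr rfl fun i _ => hνJ i M,
    Fin.sum_ite_val_lt (hν I hI M).1 (hk M)]

end IsIdealOrder

/-- Let `R` be an almost Dedekind domain and, for every nonzero ideal `J`, let
`ν J M` be the exponent with `J R_M = (M R_M)^(ν J M)` (the greatest `n` with
`J ⊆ M^n`).  Then for a nonzero integral ideal `I`, the map `ν I` is continuous
(inverse topology on `Max(R)`, discrete `ℤ`) iff `I` is a product `J₁ ⋯ J_k` of an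
increasing chain `J₁ ⊆ ⋯ ⊆ J_k` of radical ideals with each `ν (J i)` continuous,
iff `I` is a finite product of radical ideals with continuous associated maps. -/
theorem stmt13 {R : Type*} [CommRing R] [IsDomain R] (hR : AlmostDedekind R)
    (ν : Ideal R → MaximalSpectrum R → ℤ)
    (hν : ∀ J : Ideal R, J ≠ ⊥ → ∀ M : MaximalSpectrum R,
      0 ≤ ν J M ∧ J ≤ M.asIdeal ^ (ν J M).toNat ∧
      ¬ J ≤ M.asIdeal ^ ((ν J M).toNat + 1))
    (I : Ideal R) (hI : I ≠ ⊥) :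
    (@Continuous _ _ (invTop R) ⊥ (ν I) ↔
      ∃ (k : ℕ) (J : Fin k → Ideal R), Monotone J ∧
        (∀ i, (J i).IsRadical ∧ @Continuous _ _ (invTop R) ⊥ (ν (J i))) ∧
        I = ∏ i, J i) ∧
    (@Continuous _ _ (invTop R) ⊥ (ν I) ↔
      ∃ (k : ℕ) (J : Fin k → Ideal R),
        (∀ i, (J i).IsRadical ∧ @Continuous _ _ (invTop R) ⊥ (ν (J i))) ∧
        I = ∏ i, J i) := by
  have hν : IsIdealOrder ν := hν
  have hforward := hν.exists_monotone_isRadical_prod_eq hR hI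
  have hbackward : ∀ (k : ℕ) (J : Fin k → Ideal R),
      (∀ i, (J i).IsRadical ∧ Continuous[invTop R, ⊥] (ν (J i))) → I = ∏ i, J i →
      Continuous[invTop R, ⊥] (ν I) :=
    fun _ _ hJ hIJ => hν.continuous_of_eq_prod hR hI hIJ fun i _ => (hJ i).2
  refine ⟨⟨hforward, fun ⟨k, J, _, hJ, hIJ⟩ => hbackward k J hJ hIJ⟩,
    ⟨fun hc => ?_, fun ⟨k, J, hJ, hIJ⟩ => hbackward k J hJ hIJ⟩⟩
  obtain ⟨k, J, -, hJ, hIJ⟩ := hforward hc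
  exact ⟨k, J, hJ, hIJ⟩
end
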